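/- arXiv:1603.08752 — 9 statements merged into one kernel-verified Lean document; each statement's English description precedes it below -/
import Mathlib

section
/- Let α_1,...,α_n, β_1,...,β_n be complex numbers and define c_j = ∑_{ℓ=1}^n α_ℓ^j β_ℓ for j ≥ 0. Then every minor of order k > n of the infinite Hankel matrix [c_{i+j-2}]_{i,j} equals zero. -/
open Finset

/-!
Writing `c_{r_i + s_j} = ∑_ℓ (α_ℓ^{r_i} β_ℓ) · α_ℓ^{s_j}` factors the `k × k` minor as the product of a
`k × n` and an `n × k` matrix, so its rank is at most `n < k` and its determinant vanishes.
-/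

namespace Matrix

theorem det_mul_eq_zero_of_card_lt {R m n : Type*} [CommRing R] [IsDomain R]
    [Fintype m] [DecidableEq m] [Fintype n] (A : Matrix m n R) (B : Matrix n m R)
    (h : Fintype.card n < Fintype.card m) : (A * B).det = 0 := by
  by_contra hdet
  have hrank : (A * B).rank = Fintype.card m := rank_of_det_ne_zero hdet
  have hle : (A * B).rank ≤ Fintype.card n := (rank_mul_le_left A B).trans (rank_le_card_width A)
  omega

theorem of_sum_pow_add_mul_eq_mul {R ι m m' : Type*} [CommSemiring R] [Fintype ι]
    (α β : ι → R) (r : m → ℕ) (s : m' → ℕ) :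
    of (fun i j => ∑ ℓ, α ℓ ^ (r i + s j) * β ℓ) =
      of (fun i ℓ => α ℓ ^ r i * β ℓ) * of (fun ℓ j => α ℓ ^ s j) := by
  ext i j
  simp only [of_apply, mul_apply, pow_add]
  exact sum_congr rfl fun ℓ _ => by ring

end Matrix

theorem hankel_minor_eq_zero_general (n k : ℕ) (hk : n < k)
    (α β : Fin n → ℂ) (c : ℕ → ℂ) (hc : ∀ j : ℕ, c j = ∑ ℓ, α ℓ ^ j * β ℓ)
    (r s : Fin k → ℕ) :
    Matrix.det (Matrix.of fun i j : Fin k => c (r i + s j)) = 0 := by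
  obtain rfl : c = fun j => ∑ ℓ, α ℓ ^ j * β ℓ := funext hc
  rw [Matrix.of_sum_pow_add_mul_eq_mul]
  exact Matrix.det_mul_eq_zero_of_card_lt _ _ (by simpa using hk)

/-- Any minor of order `k > n` of the Hankel matrix generated by
`c_j = ∑_{ℓ=1}^n α_ℓ^j β_ℓ` vanishes. -/
theorem hankel_minor_eq_zero (n k : ℕ) (hk : n < k)
    (α β : Fin n → ℂ) (c : ℕ → ℂ) (hc : ∀ j : ℕ, c j = ∑ ℓ, α ℓ ^ j * β ℓ)
    (r s : Fin k → ℕ) (hr : StrictMono r) (hs : StrictMono s) :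
    Matrix.det (Matrix.of fun i j : Fin k => c (r i + s j)) = 0 :=
  hankel_minor_eq_zero_general n k hk α β c hc r s
end

section
/- For a sequence c_0, c_1, ..., the Hankel determinants of three successive orders satisfy the Sylvester identity: H_{k-2}·H_k = H_{k-1}·M - L^2, where M is the determinant of the (k-1)×(k-1) matrix obtained from the Hankel matrix of order k-1 by replacing its last row and last column indices appropriately (entries c_{i+j-2} for i,j in {1,...,k-2} bordered by c_{k-1+i-1} and c_{k-1+j-1} with corner c_{2k-2}), and L is the analogous determinant with corner c_{2k-3}. -/
/-!
Reindexing `Fin (n + 2)` as `Fin n ⊕ Fin 2`, Jacobi's theorem says that the `2 × 2` corner of the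
adjugate has determinant `det A * det A₁₁`, where `A₁₁` is the complementary `n × n` corner. Its
four entries are signed `(n + 1)`-minors of `A`, so this is the Desnanot–Jacobi identity. For a
Hankel matrix `A = (c (i + j))` of order `k` these minors are `H_{k-1}`, `M` and, since `A` is
symmetric, `L` twice.
-/

namespace Matrix

section Blocks

variable {l m n o p q α : Type*} [Fintype n] [Fintype o] [NonUnitalNonAssocSemiring α]

theorem toBlocks₁₂_mul (A : Matrix (l ⊕ m) (n ⊕ o) α) (B : Matrix (n ⊕ o) (p ⊕ q) α) :
    (A * B).toBlocks₁₂ = A.toBlocks₁₁ * B.toBlocks₁₂ + A.toBlocks₁₂ * B.toBlocks₂₂ := by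
  ext i j
  simp [toBlocks₁₁, toBlocks₁₂, toBlocks₂₂, mul_apply, Fintype.sum_sum_type]

theorem toBlocks₂₂_mul (A : Matrix (l ⊕ m) (n ⊕ o) α) (B : Matrix (n ⊕ o) (p ⊕ q) α) :
    (A * B).toBlocks₂₂ = A.toBlocks₂₁ * B.toBlocks₁₂ + A.toBlocks₂₂ * B.toBlocks₂₂ := by
  ext i j
  simp [toBlocks₁₂, toBlocks₂₁, toBlocks₂₂, mul_apply, Fintype.sum_sum_type]

end Blocks

theorem IsSymm.det_submatrix_comm {m n R : Type*} [Fintype n] [DecidableEq n] [CommRing R]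
    {A : Matrix m m R} (hA : A.IsSymm) (f g : n → m) :
    (A.submatrix f g).det = (A.submatrix g f).det := by
  rw [← det_transpose, transpose_submatrix, hA.eq]

variable {m o R : Type*} [Fintype m] [Fintype o] [DecidableEq m] [DecidableEq o] [CommRing R]

theorem det_mul_det_adjugate_toBlocks₂₂ (A : Matrix (m ⊕ o) (m ⊕ o) R) :
    A.det * A.adjugate.toBlocks₂₂.det = A.toBlocks₁₁.det * A.det ^ Fintype.card o := by
  set B := A.adjugate
  have hAC : A * fromBlocks 1 B.toBlocks₁₂ 0 B.toBlocks₂₂ =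
      fromBlocks A.toBlocks₁₁ 0 A.toBlocks₂₁ (A.det • 1) := calc
    _ = fromBlocks A.toBlocks₁₁ A.toBlocks₁₂ A.toBlocks₂₁ A.toBlocks₂₂ *
          fromBlocks 1 B.toBlocks₁₂ 0 B.toBlocks₂₂ := by rw [fromBlocks_toBlocks]
    _ = fromBlocks A.toBlocks₁₁ (A * B).toBlocks₁₂ A.toBlocks₂₁ (A * B).toBlocks₂₂ := by
      rw [fromBlocks_multiply, toBlocks₁₂_mul, toBlocks₂₂_mul]; simp
    _ = _ := by
      rw [mul_adjugate]
      congr 1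
      · ext i j; simp [toBlocks₁₂]
      · ext i j; simp [toBlocks₂₂, one_apply]
  have := congrArg det hAC
  rwa [det_mul, det_fromBlocks_zero₂₁, det_fromBlocks_zero₁₂, det_one, one_mul, det_smul, det_one,
    mul_one] at this

/-- Jacobi's theorem on complementary minors of the adjugate. Cancelling `det A` is legitimate for
the generic matrix, whose determinant is a nonzero polynomial. -/
theorem det_adjugate_toBlocks₂₂ [Nonempty o] (A : Matrix (m ⊕ o) (m ⊕ o) R) :
    A.adjugate.toBlocks₂₂.det = A.toBlocks₁₁.det * A.det ^ (Fintype.card o - 1) := by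
  let A' := mvPolynomialX (m ⊕ o) (m ⊕ o) ℤ
  suffices A'.adjugate.toBlocks₂₂.det = A'.toBlocks₁₁.det * A'.det ^ (Fintype.card o - 1) by
    have h := congrArg (MvPolynomial.aeval fun p : (m ⊕ o) × (m ⊕ o) ↦ A p.1 p.2) this
    rw [map_mul, map_pow, AlgHom.map_det, AlgHom.map_det, AlgHom.map_det] at h
    rw [← mvPolynomialX_mapMatrix_aeval ℤ A, ← AlgHom.map_adjugate]
    exact h
  apply mul_left_cancel₀ (det_mvPolynomialX_ne_zero (m ⊕ o) ℤ)
  rw [det_mul_det_adjugate_toBlocks₂₂, mul_left_comm, ← pow_succ',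
    Nat.sub_add_cancel Fintype.card_pos]

theorem desnanot_jacobi {n : ℕ} (A : Matrix (Fin (n + 2)) (Fin (n + 2)) R) :
    A.det * (A.submatrix (Fin.castAdd 2) (Fin.castAdd 2)).det =
      (A.submatrix (Fin.last n).castSucc.succAbove (Fin.last n).castSucc.succAbove).det *
          (A.submatrix Fin.castSucc Fin.castSucc).det -
        (A.submatrix Fin.castSucc (Fin.last n).castSucc.succAbove).det *
          (A.submatrix (Fin.last n).castSucc.succAbove Fin.castSucc).det := by
  let e : Fin n ⊕ Fin 2 ≃ Fin (n + 2) := finSumFinEquiv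
  have he0 : e (Sum.inr 0) = (Fin.last n).castSucc := by ext; simp [e]
  have he1 : e (Sum.inr 1) = Fin.last (n + 1) := by ext; simp [e]
  have h11 : (A.submatrix e e).toBlocks₁₁ = A.submatrix (Fin.castAdd 2) (Fin.castAdd 2) := rfl
  have h := det_adjugate_toBlocks₂₂ (A.submatrix e e)
  rw [h11, adjugate_submatrix_equiv_self, det_submatrix_equiv_self, det_fin_two] at h
  have hself : ∀ a : ℕ, (-1 : R) ^ (a + a) = 1 := fun a => Even.neg_one_pow ⟨a, rfl⟩
  have hsign : ∀ a b : ℕ, (-1 : R) ^ (a + b) * (-1) ^ (b + a) = 1 := fun a b => by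
    rw [add_comm b, ← pow_add, hself]
  simp only [toBlocks₂₂, of_apply, submatrix_apply, he0, he1, adjugate_fin_succ_eq_det_submatrix,
    Fin.succAbove_last, hself, one_mul, Fintype.card_fin, Nat.add_one_sub_one, pow_one] at h
  linear_combination -h - (A.submatrix Fin.castSucc (Fin.last n).castSucc.succAbove).det *
    (A.submatrix (Fin.last n).castSucc.succAbove Fin.castSucc).det *
      hsign (Fin.last (n + 1)) (Fin.last n).castSucc

end Matrix

theorem Fin.val_succAbove_castSucc_last {n : ℕ} (i : Fin (n + 1)) :
    ((Fin.last n).castSucc.succAbove i : ℕ) = if (i : ℕ) < n then (i : ℕ) else n + 1 := by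
  by_cases hi : (i : ℕ) < n
  · have hlt : i.castSucc < (Fin.last n).castSucc := by
      rwa [Fin.castSucc_lt_castSucc_iff, Fin.lt_def, Fin.val_last]
    rw [Fin.succAbove_of_castSucc_lt _ _ hlt, if_pos hi, Fin.val_castSucc]
  · have hle : (Fin.last n).castSucc ≤ i.castSucc := by
      rw [Fin.castSucc_le_castSucc_iff, Fin.le_def, Fin.val_last]; omega
    rw [Fin.succAbove_of_le_castSucc _ _ hle, if_neg hi, Fin.val_succ]
    omega

noncomputable def Hdet (c : ℕ → ℂ) (k : ℕ) : ℂ :=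
  Matrix.det (Matrix.of fun i j : Fin k => c ((i : ℕ) + (j : ℕ)))

/-- Sylvester's determinantal identity for Hankel determinants of three
successive orders.  Here the rows/columns of `M` are indexed by
`{0,…,k-3,k-1}` and those of `L` by `{0,…,k-3,k-1}` (rows) and
`{0,…,k-3,k-2}` (columns). -/
theorem hankel_sylvester (c : ℕ → ℂ) (k : ℕ) (hk : 2 ≤ k) :
    Hdet c (k - 2) * Hdet c k =
      Hdet c (k - 1) *
        Matrix.det (Matrix.of fun i j : Fin (k - 1) =>
          c ((if (i : ℕ) < k - 2 then (i : ℕ) else k - 1) +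
             (if (j : ℕ) < k - 2 then (j : ℕ) else k - 1))) -
      (Matrix.det (Matrix.of fun i j : Fin (k - 1) =>
          c ((if (i : ℕ) < k - 2 then (i : ℕ) else k - 1) +
             (if (j : ℕ) < k - 2 then (j : ℕ) else k - 2)))) ^ 2 := by
  obtain ⟨n, rfl⟩ := Nat.exists_eq_add_of_le' hk
  let A : Matrix (Fin (n + 2)) (Fin (n + 2)) ℂ := Matrix.of fun i j => c (i + j)
  let p : Fin (n + 2) := (Fin.last n).castSucc
  have hM : (Matrix.of fun i j : Fin (n + 1) =>
      c ((if (i : ℕ) < n then (i : ℕ) else n + 1) + (if (j : ℕ) < n then (j : ℕ) else n + 1))) =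
      A.submatrix p.succAbove p.succAbove := by
    ext i j
    simp [A, p, Fin.val_succAbove_castSucc_last]
  have hL : (Matrix.of fun i j : Fin (n + 1) =>
      c ((if (i : ℕ) < n then (i : ℕ) else n + 1) + (if (j : ℕ) < n then (j : ℕ) else n))) =
      A.submatrix p.succAbove Fin.castSucc := by
    ext i j
    have hj : (if (j : ℕ) < n then (j : ℕ) else n) = j := by split_ifs <;> omega
    simp [A, p, Fin.val_succAbove_castSucc_last, hj]
  have hA : A.IsSymm := Matrix.IsSymm.ext fun i j => by simp [A, add_comm]
  have hH₀ : Hdet c n = (A.submatrix (Fin.castAdd 2) (Fin.castAdd 2)).det := rfl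
  have hH₁ : Hdet c (n + 1) = (A.submatrix Fin.castSucc Fin.castSucc).det := rfl
  have hH₂ : Hdet c (n + 2) = A.det := rfl
  simp only [Nat.add_sub_cancel, Nat.add_succ_sub_one, hM, hL, hH₀, hH₁, hH₂]
  linear_combination Matrix.desnanot_jacobi A - (A.submatrix p.succAbove Fin.castSucc).det *
    hA.det_submatrix_comm Fin.castSucc p.succAbove
end

section
/- Let {c_j} be a sequence of complex numbers, and define the k-th Hankel polynomial 𝓗_k(x) as the determinant of the (k+1)×(k+1) matrix whose first k rows are (c_{i-1}, c_i, ..., c_{i+k-1}) for i = 1,...,k and whose last row is (1, x, x^2, ..., x^k). Write 𝓗_k(x) = H_k x^k + h_{k,1} x^{k-1} + ... . Then the Jacobi–Joachimsthal identity holds: H_k^2 · 𝓗_{k-2}(x) + (H_k h_{k-1,1} − H_{k-1} h_{k,1} − H_k H_{k-1} x) · 𝓗_{k-1}(x) + H_{k-1}^2 · 𝓗_k(x) ≡ 0 as polynomials in x. -/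
/-!
Write `L` for the moment functional `xⁿ ↦ cₙ`. Expanding `𝓗_m` along its last row gives the
orthogonality relations `L(xⁱ 𝓗_m) = 0` for `i < m` and `L(xᵐ 𝓗_m) = H_{m+1}`. The combination
`F` in the identity has its coefficients of `x^{k-1}` and `x^k` cancel, so `deg F ≤ k - 2`, and the
relations give `L(xⁱ F) = 0` for `i ≤ k - 2`. Hence the coefficient vector of `F` lies in the kernel
of the Hankel matrix of order `k - 1`, so `F = 0` whenever `H_{k-1}` is not a zero divisor. This
holds for the sequence of indeterminates over `ℤ` (specialize to `cₙ = [n = k - 2]`, an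
anti-diagonal matrix), and every sequence is a specialization of that one.
-/

open Finset Polynomial

/-- The `k`-th Hankel polynomial of the sequence `{c_j}`: the determinant of the
`(k+1)×(k+1)` matrix whose first `k` rows are `(c_{i}, …, c_{i+k})` and whose
last row is `(1, x, …, x^k)`. -/
noncomputable def Hpoly (c : ℕ → ℂ) (k : ℕ) : Polynomial ℂ :=
  Matrix.det (Matrix.of fun i j : Fin (k + 1) =>
    if (i : ℕ) < k then Polynomial.C (c ((i : ℕ) + (j : ℕ))) else Polynomial.X ^ (j : ℕ))

noncomputable section

section CommRing

variable {R S : Type*} [CommRing R] [CommRing S]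

def hankelDet (c : ℕ → R) (k : ℕ) : R :=
  Matrix.det (Matrix.of fun i j : Fin k => c ((i : ℕ) + (j : ℕ)))

def hankelBordered (c : ℕ → R) (m : ℕ) (v : Fin (m + 1) → R) :
    Matrix (Fin (m + 1)) (Fin (m + 1)) R :=
  Matrix.of fun i j => if (i : ℕ) < m then c ((i : ℕ) + (j : ℕ)) else v j

def hankelPoly (c : ℕ → R) (m : ℕ) : R[X] :=
  (hankelBordered (fun n => C (c n)) m fun j => X ^ (j : ℕ)).det

/-- The cofactor of the entry in column `j` of the last row of `hankelBordered c m v`. -/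
def hankelCofactor (c : ℕ → R) (m : ℕ) (j : Fin (m + 1)) : R :=
  (-1) ^ (m + (j : ℕ)) * Matrix.det (Matrix.of fun p q : Fin m => c ((p : ℕ) + (j.succAbove q : ℕ)))

/-- The moment functional `Xⁿ ↦ cₙ`. -/
def momentFunctional (c : ℕ → R) : R[X] →ₗ[R] R :=
  Polynomial.lsum fun n => LinearMap.mulLeft R (c n)

theorem hankelDet_map (f : R →+* S) (c : ℕ → R) (m : ℕ) :
    hankelDet (f ∘ c) m = f (hankelDet c m) := by
  rw [hankelDet, hankelDet, RingHom.map_det]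
  rfl

theorem hankelCofactor_map (f : R →+* S) (c : ℕ → R) (m : ℕ) (j : Fin (m + 1)) :
    hankelCofactor (f ∘ c) m j = f (hankelCofactor c m j) := by
  simp only [hankelCofactor, map_mul, map_pow, map_neg, map_one, RingHom.map_det]
  rfl

theorem hankelPoly_map (f : R →+* S) (c : ℕ → R) (m : ℕ) :
    hankelPoly (f ∘ c) m = (hankelPoly c m).map f := by
  rw [hankelPoly, hankelPoly, ← coe_mapRingHom, RingHom.map_det]
  congr 1
  ext i j
  by_cases h : (i : ℕ) < m <;> simp [hankelBordered, h]

theorem det_hankelBordered (c : ℕ → R) (m : ℕ) (v : Fin (m + 1) → R) :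
    (hankelBordered c m v).det = ∑ j, v j * hankelCofactor c m j := by
  rw [Matrix.det_succ_row _ (Fin.last m)]
  refine Finset.sum_congr rfl fun j _ => ?_
  have hminor : (hankelBordered c m v).submatrix (Fin.last m).succAbove j.succAbove =
      Matrix.of fun p q : Fin m => c ((p : ℕ) + (j.succAbove q : ℕ)) := by
    ext p q
    simp [hankelBordered, Fin.succAbove_last]
  rw [hminor, hankelCofactor]
  simp only [hankelBordered, Matrix.of_apply, Fin.val_last, lt_irrefl, if_false]
  ring

theorem hankelPoly_eq_sum_monomial (c : ℕ → R) (m : ℕ) :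
    hankelPoly c m = ∑ j : Fin (m + 1), monomial j (hankelCofactor c m j) := by
  rw [hankelPoly, det_hankelBordered]
  refine Finset.sum_congr rfl fun j _ => ?_
  rw [show (fun n => C (c n)) = C ∘ c from rfl, hankelCofactor_map, C_mul_X_pow_eq_monomial.symm,
    mul_comm]

theorem coeff_hankelPoly (c : ℕ → R) (m : ℕ) (j : Fin (m + 1)) :
    (hankelPoly c m).coeff j = hankelCofactor c m j := by
  simp [hankelPoly_eq_sum_monomial, coeff_monomial, Fin.val_inj]

theorem natDegree_hankelPoly_le (c : ℕ → R) (m : ℕ) : (hankelPoly c m).natDegree ≤ m := by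
  rw [hankelPoly_eq_sum_monomial]
  exact natDegree_sum_le_of_forall_le _ _ fun j _ =>
    (natDegree_monomial_le _).trans (Nat.lt_succ_iff.mp j.is_lt)

theorem hankelCofactor_last (c : ℕ → R) (m : ℕ) :
    hankelCofactor c m (Fin.last m) = hankelDet c m := by
  simp [hankelCofactor, hankelDet, Fin.succAbove_last, ← two_mul, pow_mul]

theorem coeff_hankelPoly_self (c : ℕ → R) (m : ℕ) : (hankelPoly c m).coeff m = hankelDet c m := by
  simpa [hankelCofactor_last] using coeff_hankelPoly c m (Fin.last m)

theorem momentFunctional_monomial (c : ℕ → R) (n : ℕ) (a : R) :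
    momentFunctional c (monomial n a) = c n * a := by
  simp [momentFunctional, lsum_apply, sum_monomial_index]

theorem momentFunctional_C_mul (c : ℕ → R) (a : R) (p : R[X]) :
    momentFunctional c (C a * p) = a * momentFunctional c p := by
  rw [C_mul', map_smul, smul_eq_mul]

theorem momentFunctional_X_pow_mul_hankelPoly (c : ℕ → R) (m i : ℕ) :
    momentFunctional c (X ^ i * hankelPoly c m) =
      (hankelBordered c m fun j => c (i + (j : ℕ))).det := by
  simp only [hankelPoly_eq_sum_monomial, Finset.mul_sum, map_sum, X_pow_mul_monomial,
    momentFunctional_monomial, det_hankelBordered, add_comm]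

theorem momentFunctional_X_pow_mul_hankelPoly_eq_zero_of_lt (c : ℕ → R) {m i : ℕ} (h : i < m) :
    momentFunctional c (X ^ i * hankelPoly c m) = 0 := by
  rw [momentFunctional_X_pow_mul_hankelPoly]
  refine Matrix.det_zero_of_row_eq (i := ⟨i, by omega⟩) (j := Fin.last m)
    (by simp [Fin.ext_iff]; omega) ?_
  funext q
  simp [hankelBordered, h]

theorem momentFunctional_X_pow_mul_hankelPoly_self (c : ℕ → R) (m : ℕ) :
    momentFunctional c (X ^ m * hankelPoly c m) = hankelDet c (m + 1) := by
  rw [momentFunctional_X_pow_mul_hankelPoly, hankelDet]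
  congr 1
  ext p q
  by_cases h : (p : ℕ) < m
  · simp [hankelBordered, h]
  · simp [hankelBordered, show (p : ℕ) = m by omega]

theorem momentFunctional_X_pow_mul_of_natDegree_le (c : ℕ → R) {p : R[X]} {m : ℕ}
    (hp : p.natDegree ≤ m) (i : ℕ) :
    momentFunctional c (X ^ i * p) = ∑ j : Fin (m + 1), c (i + (j : ℕ)) * p.coeff j := by
  conv_lhs => rw [as_sum_range' p (m + 1) (by omega)]
  simp only [Finset.mul_sum, map_sum, X_pow_mul_monomial, momentFunctional_monomial,
    Finset.sum_range, add_comm]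

theorem eq_zero_of_momentFunctional_X_pow_mul_eq_zero [NoZeroDivisors R] {c : ℕ → R}
    {p : R[X]} {m : ℕ} (hH : hankelDet c (m + 1) ≠ 0) (hp : p.natDegree ≤ m)
    (h : ∀ i ≤ m, momentFunctional c (X ^ i * p) = 0) : p = 0 := by
  have hcoeff : (fun j : Fin (m + 1) => p.coeff j) = 0 := by
    refine Matrix.eq_zero_of_mulVec_eq_zero hH (funext fun i => ?_)
    rw [Pi.zero_apply, ← h i (Nat.lt_succ_iff.mp i.is_lt),
      momentFunctional_X_pow_mul_of_natDegree_le c hp]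
    rfl
  ext n
  rcases lt_or_ge n (m + 1) with hn | hn
  · simpa using congrFun hcoeff ⟨n, hn⟩
  · exact coeff_eq_zero_of_natDegree_lt (by omega)

/-- The left-hand side of the Jacobi–Joachimsthal identity for `k = l + 2`. -/
def hankelThreeTerm (c : ℕ → R) (l : ℕ) : R[X] :=
  C (hankelDet c (l + 2)) ^ 2 * hankelPoly c l +
    (C (hankelDet c (l + 2) * (hankelPoly c (l + 1)).coeff l) -
      C (hankelDet c (l + 1) * (hankelPoly c (l + 2)).coeff (l + 1)) -
      C (hankelDet c (l + 2) * hankelDet c (l + 1)) * X) * hankelPoly c (l + 1) +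
    C (hankelDet c (l + 1)) ^ 2 * hankelPoly c (l + 2)

section ThreeTerm

variable (c : ℕ → R) (l : ℕ)

local notation "H₁" => hankelDet c (l + 1)
local notation "H₂" => hankelDet c (l + 2)
local notation "h₁" => Polynomial.coeff (hankelPoly c (l + 1)) l
local notation "h₂" => Polynomial.coeff (hankelPoly c (l + 2)) (l + 1)

theorem coeff_hankelThreeTerm_succ (n : ℕ) :
    (hankelThreeTerm c l).coeff (n + 1) =
      H₂ ^ 2 * (hankelPoly c l).coeff (n + 1) +
        (H₂ * h₁ - H₁ * h₂) * (hankelPoly c (l + 1)).coeff (n + 1) -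
        H₂ * H₁ * (hankelPoly c (l + 1)).coeff n +
        H₁ ^ 2 * (hankelPoly c (l + 2)).coeff (n + 1) := by
  simp only [hankelThreeTerm, ← C_pow, sub_mul, mul_assoc, coeff_add, coeff_sub, coeff_C_mul,
    coeff_X_mul, ← C_sub]
  ring

theorem natDegree_hankelThreeTerm_le : (hankelThreeTerm c l).natDegree ≤ l := by
  refine natDegree_le_iff_coeff_eq_zero.mpr fun n hn => ?_
  obtain ⟨t, rfl⟩ : ∃ t, n = l + 1 + t := ⟨n - (l + 1), by omega⟩
  have hzero : ∀ m n, m < n → (hankelPoly c m).coeff n = 0 := fun m n h =>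
    coeff_eq_zero_of_natDegree_lt ((natDegree_hankelPoly_le c m).trans_lt h)
  rcases t with _ | _ | t
  · rw [coeff_hankelThreeTerm_succ, hzero l (l + 1) (by omega), coeff_hankelPoly_self]
    ring
  · rw [show l + 1 + 1 = (l + 1) + 1 by rfl, coeff_hankelThreeTerm_succ,
      hzero l (l + 1 + 1) (by omega), hzero (l + 1) (l + 1 + 1) (by omega),
      coeff_hankelPoly_self, coeff_hankelPoly_self]
    ring
  · rw [show l + 1 + (t + 2) = (l + t + 2) + 1 by omega, coeff_hankelThreeTerm_succ,
      hzero l (l + t + 2 + 1) (by omega), hzero (l + 1) (l + t + 2 + 1) (by omega),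
      hzero (l + 1) (l + t + 2) (by omega), hzero (l + 2) (l + t + 2 + 1) (by omega)]
    ring

theorem momentFunctional_X_pow_mul_hankelThreeTerm_eq_zero {i : ℕ} (hi : i ≤ l) :
    momentFunctional c (X ^ i * hankelThreeTerm c l) = 0 := by
  have hexpand : X ^ i * hankelThreeTerm c l =
      C (H₂ ^ 2) * (X ^ i * hankelPoly c l) +
        C (H₂ * h₁ - H₁ * h₂) * (X ^ i * hankelPoly c (l + 1)) -
        C (H₂ * H₁) * (X ^ (i + 1) * hankelPoly c (l + 1)) +
        C (H₁ ^ 2) * (X ^ i * hankelPoly c (l + 2)) := by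
    simp only [hankelThreeTerm, map_pow, map_sub, map_mul, pow_succ]
    ring
  rw [hexpand, map_add, map_sub, map_add, momentFunctional_C_mul, momentFunctional_C_mul,
    momentFunctional_C_mul, momentFunctional_C_mul,
    momentFunctional_X_pow_mul_hankelPoly_eq_zero_of_lt c (i := i) (m := l + 1) (by omega),
    momentFunctional_X_pow_mul_hankelPoly_eq_zero_of_lt c (i := i) (m := l + 2) (by omega)]
  rcases hi.lt_or_eq with hi | rfl
  · rw [momentFunctional_X_pow_mul_hankelPoly_eq_zero_of_lt c hi,
      momentFunctional_X_pow_mul_hankelPoly_eq_zero_of_lt c (i := i + 1) (m := l + 1) (by omega)]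
    ring
  · rw [momentFunctional_X_pow_mul_hankelPoly_self, momentFunctional_X_pow_mul_hankelPoly_self]
    ring

theorem hankelThreeTerm_eq_zero_of_hankelDet_ne_zero [NoZeroDivisors R] (h : H₁ ≠ 0) :
    hankelThreeTerm c l = 0 :=
  eq_zero_of_momentFunctional_X_pow_mul_eq_zero h (natDegree_hankelThreeTerm_le c l)
    fun _ hi => momentFunctional_X_pow_mul_hankelThreeTerm_eq_zero c l hi

theorem hankelThreeTerm_map (f : R →+* S) :
    hankelThreeTerm (f ∘ c) l = (hankelThreeTerm c l).map f := by
  simp only [hankelThreeTerm, hankelDet_map, hankelPoly_map, coeff_map, Polynomial.map_add,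
    Polynomial.map_sub, Polynomial.map_mul, Polynomial.map_pow, map_C, map_X, map_mul]

end ThreeTerm

theorem isUnit_hankelDet_single (l : ℕ) : IsUnit (hankelDet (Pi.single l 1 : ℕ → R) (l + 1)) := by
  have hrev : (Matrix.of fun i j : Fin (l + 1) => (Pi.single l 1 : ℕ → R) ((i : ℕ) + (j : ℕ))) =
      (1 : Matrix (Fin (l + 1)) (Fin (l + 1)) R).submatrix Fin.revPerm id := by
    ext i j
    simp only [Matrix.of_apply, Matrix.submatrix_apply, id, Matrix.one_apply, Pi.single_apply,
      Fin.ext_iff, Fin.revPerm_apply, Fin.val_rev]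
    congr 1
    exact propext (by omega)
  rw [hankelDet, hrev, Matrix.det_permute, Matrix.det_one, mul_one]
  exact ((Equiv.Perm.sign Fin.revPerm).isUnit.map (Int.castRingHom R) :)

theorem hankelDet_X_ne_zero (l : ℕ) :
    hankelDet (MvPolynomial.X : ℕ → MvPolynomial ℕ ℤ) (l + 1) ≠ 0 := by
  intro h
  have hspec : MvPolynomial.eval₂Hom (Int.castRingHom ℤ) (Pi.single l 1) ∘ MvPolynomial.X =
      (Pi.single l 1 : ℕ → ℤ) :=
    funext fun n => MvPolynomial.eval₂Hom_X' _ _ n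
  have := isUnit_hankelDet_single (R := ℤ) l
  rw [← hspec, hankelDet_map, h, map_zero] at this
  exact not_isUnit_zero this

theorem hankelThreeTerm_eq_zero (c : ℕ → R) (l : ℕ) : hankelThreeTerm c l = 0 := by
  have hgeneric : hankelThreeTerm (MvPolynomial.X : ℕ → MvPolynomial ℕ ℤ) l = 0 :=
    hankelThreeTerm_eq_zero_of_hankelDet_ne_zero _ l (hankelDet_X_ne_zero l)
  have hspec : MvPolynomial.eval₂Hom (Int.castRingHom R) c ∘ MvPolynomial.X = c :=
    funext fun n => MvPolynomial.eval₂Hom_X' _ _ n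
  rw [← hspec, hankelThreeTerm_map, hgeneric, Polynomial.map_zero]

end CommRing

end

/-- The Jacobi–Joachimsthal identity. -/
theorem jacobi_joachimsthal (c : ℕ → ℂ) (k : ℕ) (hk : 2 ≤ k) :
    C (Hdet c k) ^ 2 * Hpoly c (k - 2) +
      (C (Hdet c k * (Hpoly c (k - 1)).coeff (k - 2)) -
       C (Hdet c (k - 1) * (Hpoly c k).coeff (k - 1)) -
       C (Hdet c k * Hdet c (k - 1)) * X) * Hpoly c (k - 1) +
      C (Hdet c (k - 1)) ^ 2 * Hpoly c k = 0 := by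
  obtain ⟨l, rfl⟩ : ∃ l, k = l + 2 := ⟨k - 2, by omega⟩
  exact hankelThreeTerm_eq_zero c l
end

section
/- Let {c_j} be a sequence with Hankel determinants H_k and Hankel polynomials 𝓗_k(x). Suppose H_{k-2} ≠ 0, H_{k-1} = 0, and h_{k-1,1} = 0 (the coefficient of x^{k-2} in 𝓗_{k-1}). Then 𝓗_{k-1}(x) is identically zero. -/
open Finset Polynomial

/-! A left null vector `w` of the singular Hankel matrix `H_{m+1}` has nonzero last entry, since
`H_m` is invertible. Combining the first `m + 1` rows of the determinant defining `𝓗_{m+1}` with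
weights `w` leaves only the entry `s = ∑ wᵢ c_{i+m+1}` in the last column, and expanding along
that row gives `w_m 𝓗_{m+1} = -s 𝓗_m`. The coefficient of `x^m` then reads `0 = -s H_m`, so
`s = 0` and hence `𝓗_{m+1} = 0`. -/

open Matrix

theorem Matrix.exists_vecMul_eq_zero_last_ne_zero {R : Type*} [CommRing R] [IsDomain R] {n : ℕ}
    {A : Matrix (Fin (n + 1)) (Fin (n + 1)) R} (hA : A.det = 0)
    (hA₀ : (A.submatrix Fin.castSucc Fin.castSucc).det ≠ 0) :
    ∃ w, w ᵥ* A = 0 ∧ w (Fin.last n) ≠ 0 := by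
  obtain ⟨w, hw0, hw⟩ := exists_vecMul_eq_zero_iff.2 hA
  refine ⟨w, hw, fun hlast => hw0 ?_⟩
  have hker : (w ∘ Fin.castSucc) ᵥ* A.submatrix Fin.castSucc Fin.castSucc = 0 := by
    ext j
    simpa [vecMul, dotProduct, Fin.sum_univ_castSucc, hlast] using congrFun hw j.castSucc
  have hinit : w ∘ Fin.castSucc = 0 := by
    by_contra hne
    exact hA₀ (exists_vecMul_eq_zero_iff.1 ⟨_, hne, hker⟩)
  ext i
  exact Fin.lastCases hlast (congrFun hinit) i

def hankelMatrix (c : ℕ → ℂ) (k : ℕ) : Matrix (Fin k) (Fin k) ℂ :=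
  of fun i j => c (i + j)

noncomputable def hankelPolyMatrix (c : ℕ → ℂ) (k : ℕ) : Matrix (Fin (k + 1)) (Fin (k + 1)) ℂ[X] :=
  of fun i j => if (i : ℕ) < k then C (c (i + j)) else X ^ (j : ℕ)

theorem Hpoly_eq_det_hankelPolyMatrix (c : ℕ → ℂ) (k : ℕ) :
    Hpoly c k = (hankelPolyMatrix c k).det := rfl

theorem det_hankelPolyMatrix_submatrix_castSucc (c : ℕ → ℂ) (k : ℕ) (j : Fin (k + 1)) :
    ((hankelPolyMatrix c k).submatrix Fin.castSucc j.succAbove).det =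
      C (of fun i l : Fin k => c (i + j.succAbove l)).det := by
  rw [RingHom.map_det]
  congr 1
  ext i l
  simp [hankelPolyMatrix]

theorem Hpoly_eq_sum (c : ℕ → ℂ) (k : ℕ) :
    Hpoly c k = ∑ j : Fin (k + 1),
      C ((-1) ^ (k + j : ℕ) * (of fun i l : Fin k => c (i + j.succAbove l)).det) * X ^ (j : ℕ) := by
  rw [Hpoly_eq_det_hankelPolyMatrix, det_succ_row _ (Fin.last k)]
  refine sum_congr rfl fun j _ => ?_
  rw [Fin.succAbove_last, det_hankelPolyMatrix_submatrix_castSucc]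
  simp [hankelPolyMatrix]

theorem coeff_Hpoly_self (c : ℕ → ℂ) (k : ℕ) : (Hpoly c k).coeff k = Hdet c k := by
  rw [Hpoly_eq_sum, finsetSum_coeff, Fintype.sum_eq_single (Fin.last k)]
  · simp [Hdet]
  · intro j hj
    rw [coeff_C_mul_X_pow, if_neg (fun h => hj (Fin.ext h.symm))]

theorem C_mul_Hpoly_succ_of_vecMul_eq_zero (c : ℕ → ℂ) (m : ℕ) {w : Fin (m + 1) → ℂ}
    (hw : w ᵥ* hankelMatrix c (m + 1) = 0) :
    C (w (Fin.last m)) * Hpoly c (m + 1) = -C (∑ i, w i * c (i + (m + 1))) * Hpoly c m := by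
  set M := hankelPolyMatrix c (m + 1)
  set r : Fin (m + 2) := (Fin.last m).castSucc
  set s := ∑ i, w i * c (i + (m + 1))
  set u : Fin (m + 2) → ℂ[X] := Fin.snoc (fun i => C (w i)) 0
  have hrow : ∑ i, u i • M i = C s • Pi.single (Fin.last (m + 1)) 1 := by
    have hcol (j : Fin (m + 1)) : ∑ i, w i * c (i + j) = 0 := congrFun hw j
    funext j
    rw [Finset.sum_apply, Fin.sum_univ_castSucc]
    simp only [u, Fin.snoc_castSucc, Fin.snoc_last, Pi.smul_apply, smul_eq_mul, M,
      hankelPolyMatrix, of_apply, Fin.val_castSucc, Fin.is_lt, if_true, ← C_mul, ← map_sum]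
    refine Fin.lastCases ?_ (fun j => ?_) j
    · simp [s]
    · simp [hcol]
  have hminor : M.submatrix r.succAbove (Fin.last (m + 1)).succAbove = hankelPolyMatrix c m := by
    ext i j : 1
    refine Fin.lastCases ?_ (fun i => ?_) i <;> simp [M, r, hankelPolyMatrix]
  calc C (w (Fin.last m)) * M.det
      = (M.updateRow r (∑ i, u i • M i)).det := by
        simp [det_updateRow_sum, u, r]
    _ = C s * adjugate M (Fin.last (m + 1)) r := by
        rw [hrow, det_updateRow_smul, adjugate_apply]
    _ = -C s * Hpoly c m := by
        have hsign : (-1 : ℂ[X]) ^ (m + (m + 1)) = -1 := by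
          rw [← add_assoc, pow_succ, ← two_mul, pow_mul]
          simp
        rw [adjugate_fin_succ_eq_det_submatrix, hminor]
        simp [r, hsign, Hpoly_eq_det_hankelPolyMatrix]

theorem hankel_poly_eq_zero_of_degenerate (c : ℕ → ℂ) (k : ℕ) (hk : 2 ≤ k)
    (h2 : Hdet c (k - 2) ≠ 0) (h1 : Hdet c (k - 1) = 0)
    (h11 : (Hpoly c (k - 1)).coeff (k - 2) = 0) :
    Hpoly c (k - 1) = 0 := by
  obtain ⟨m, rfl⟩ : ∃ m, k = m + 2 := ⟨k - 2, by omega⟩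
  change Hdet c m ≠ 0 at h2
  change (Hpoly c (m + 1)).coeff m = 0 at h11
  obtain ⟨w, hw, hlast⟩ := exists_vecMul_eq_zero_last_ne_zero (A := hankelMatrix c (m + 1)) h1 h2
  have hrel := C_mul_Hpoly_succ_of_vecMul_eq_zero c m hw
  have hs : ∑ i, w i * c (i + (m + 1)) = 0 := by
    have := congrArg (coeff · m) hrel
    simp only [coeff_C_mul, h11, mul_zero, neg_mul, coeff_neg, coeff_Hpoly_self] at this
    simpa [h2] using this.symm
  rw [hs, C_0, neg_zero, zero_mul] at hrel
  exact (mul_eq_zero.1 hrel).resolve_left (C_ne_zero.2 hlast)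
end

section
/- Let c_j = ∑_{ℓ=1}^m λ_ℓ^j for distinct complex numbers λ_1,...,λ_m, and let 𝓗_k(x) be the k-th Hankel polynomial of {c_j} with m > k. Then ∑_{ℓ=1}^m λ_ℓ^j 𝓗_k(λ_ℓ) = 0 for j ∈ {0,...,k-1}, and ∑_{ℓ=1}^m λ_ℓ^k 𝓗_k(λ_ℓ) = H_{k+1}, where H_{k+1} = det[c_{i+j-2}]_{i,j=1}^{k+1}. -/
/-!
Evaluating `𝓗_k` at `x` is expanding, along its last row `(1, x, …, x^k)`, the determinant of the
Hankel matrix `[c_{i+j}]_{i,j ≤ k}` with that row replaced. By multilinearity in the last row,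
`∑_ℓ λ_ℓ^j 𝓗_k(λ_ℓ)` is the same determinant with last row `∑_ℓ λ_ℓ^j (1, λ_ℓ, …, λ_ℓ^k) =
(c_j, …, c_{j+k})`. For `j < k` this repeats row `j`, so the determinant vanishes; for `j = k` it
is the original last row, giving `H_{k+1}`.
-/

open Finset Polynomial

namespace Matrix

variable {R : Type*}

def hankel (c : ℕ → R) (k : ℕ) : Matrix (Fin k) (Fin k) R :=
  of fun i j => c (i + j)

theorem det_updateRow_finset_sum {n ι : Type*} [Fintype n] [DecidableEq n] [CommRing R]
    (A : Matrix n n R) (i : n) (s : Finset ι) (v : ι → n → R) :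
    (A.updateRow i (∑ a ∈ s, v a)).det = ∑ a ∈ s, (A.updateRow i (v a)).det :=
  detRowAlternating.toMultilinearMap.map_update_sum s i v A

theorem sum_pow_mul_det_updateRow_pow {ι : Type*} [Fintype ι] [CommRing R] {k : ℕ}
    (A : Matrix (Fin k) (Fin k) R) (i : Fin k) (lam : ι → R) (c : ℕ → R)
    (hc : ∀ j, c j = ∑ ℓ, lam ℓ ^ j) (j : ℕ) :
    ∑ ℓ, lam ℓ ^ j * (A.updateRow i fun i' => lam ℓ ^ (i' : ℕ)).det =
      (A.updateRow i fun i' => c (j + i')).det := by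
  have hrow : (fun i' : Fin k => c (j + i')) =
      ∑ ℓ, lam ℓ ^ j • fun i' : Fin k => lam ℓ ^ (i' : ℕ) := by
    ext i'
    simp [hc, pow_add, Finset.sum_apply]
  simp only [hrow, det_updateRow_finset_sum, det_updateRow_smul]

theorem det_hankel_updateRow_last_shift_of_lt [CommRing R] (c : ℕ → R) {j k : ℕ} (hj : j < k) :
    ((hankel c (k + 1)).updateRow (Fin.last k) fun i => c (j + i)).det = 0 :=
  det_updateRow_eq_zero (i := ⟨j, by omega⟩) (Fin.ne_of_lt hj)

end Matrix

open Matrix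

theorem eval_Hpoly (c : ℕ → ℂ) (k : ℕ) (x : ℂ) :
    (Hpoly c k).eval x =
      ((hankel c (k + 1)).updateRow (Fin.last k) fun i => x ^ (i : ℕ)).det := by
  rw [Hpoly, ← coe_evalRingHom, RingHom.map_det]
  congr 1
  ext i j
  rcases Fin.eq_castSucc_or_eq_last i with ⟨i, rfl⟩ | rfl
  · simp [hankel]
  · simp

theorem sum_pow_mul_hankel_poly_eval_general (m k : ℕ)
    (lam : Fin m → ℂ)
    (c : ℕ → ℂ) (hc : ∀ j : ℕ, c j = ∑ ℓ, lam ℓ ^ j) :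
    (∀ j : ℕ, j < k → ∑ ℓ, lam ℓ ^ j * (Hpoly c k).eval (lam ℓ) = 0) ∧
    (∑ ℓ, lam ℓ ^ k * (Hpoly c k).eval (lam ℓ) = Hdet c (k + 1)) := by
  have key : ∀ j, ∑ ℓ, lam ℓ ^ j * (Hpoly c k).eval (lam ℓ) =
      ((hankel c (k + 1)).updateRow (Fin.last k) fun i => c (j + i)).det := fun j => by
    simp only [eval_Hpoly]
    exact sum_pow_mul_det_updateRow_pow _ _ lam c hc j
  refine ⟨fun j hj => ?_, ?_⟩
  · rw [key, det_hankel_updateRow_last_shift_of_lt c hj]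
  · rw [key]
    exact congrArg det (updateRow_eq_self _ _)

/-- Lemma 2.1: for `c_j = ∑_ℓ λ_ℓ^j` with distinct `λ_ℓ`, `m > k`. -/
theorem sum_pow_mul_hankel_poly_eval (m k : ℕ) (hm : k < m)
    (lam : Fin m → ℂ) (hlam : Function.Injective lam)
    (c : ℕ → ℂ) (hc : ∀ j : ℕ, c j = ∑ ℓ, lam ℓ ^ j) :
    (∀ j : ℕ, j < k → ∑ ℓ, lam ℓ ^ j * (Hpoly c k).eval (lam ℓ) = 0) ∧
    (∑ ℓ, lam ℓ ^ k * (Hpoly c k).eval (lam ℓ) = Hdet c (k + 1)) :=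
  sum_pow_mul_hankel_poly_eval_general m k lam c hc
end

section
/- Let x_1,...,x_N be distinct complex numbers, y_1,...,y_N nonzero complex numbers, W(x) = ∏(x - x_j), and τ̃_k = ∑_{j=1}^N x_j^k / (y_j W'(x_j)). Then the Hankel determinant H_N({τ̃}) = det[τ̃_{i+j-2}]_{i,j=1}^N equals (−1)^{N(N−1)/2} / ∏_{j=1}^N y_j. -/
/-!
The Hankel matrix of the moments `τ̃_k = ∑_j w_j x_j^k` factors as `Vᵀ diag(w) V` with `V` the
Vandermonde matrix of the nodes, so its determinant is `det V ^ 2 * ∏ w_j`. Here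
`w_j = 1 / (y_j W'(x_j))`, and pairing the factors `x_j - x_i` and `x_i - x_j` of `∏_j W'(x_j)`
shows `∏_j W'(x_j) = (-1)^(N(N-1)/2) det V ^ 2`; the Vandermonde determinants cancel.
-/

open Finset Polynomial

/-- `Wd x j = ∏_{i ≠ j} (x j - x i)`, i.e. `W'(x_j)` where `W(x) = ∏ (x - x_i)`. -/
noncomputable def Wd {N : ℕ} (x : Fin N → ℂ) (j : Fin N) : ℂ :=
  ∏ i ∈ Finset.univ.erase j, (x j - x i)

open Matrix

theorem Fin.sum_card_Ioi (n : ℕ) : ∑ i : Fin n, #(Ioi i) = n * (n - 1) / 2 := by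
  simp only [Fin.card_Ioi]
  rw [Fin.sum_univ_eq_sum_range (fun i => n - 1 - i), sum_range_reflect (fun i => i),
    sum_range_id]

section
variable {R : Type*} [CommRing R] {n : ℕ}

theorem hankel_moments_eq_vandermonde (w x : Fin n → R) :
    (Matrix.of fun i j : Fin n => ∑ k, w k * x k ^ ((i : ℕ) + j)) =
      (vandermonde x)ᵀ * diagonal w * vandermonde x := by
  ext i j
  rw [mul_apply]
  simp only [of_apply, mul_diagonal, transpose_apply, vandermonde_apply, pow_add]
  exact sum_congr rfl fun k _ => by ring

theorem det_hankel_moments (w x : Fin n → R) :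
    (Matrix.of fun i j : Fin n => ∑ k, w k * x k ^ ((i : ℕ) + j)).det =
      (vandermonde x).det ^ 2 * ∏ k, w k := by
  rw [hankel_moments_eq_vandermonde, det_mul, det_mul, det_transpose, det_diagonal]
  ring

theorem prod_prod_erase_sub_eq_det_vandermonde_sq (x : Fin n → R) :
    ∏ j, ∏ i ∈ univ.erase j, (x j - x i) =
      (-1) ^ (n * (n - 1) / 2) * (vandermonde x).det ^ 2 := by
  rw [← Fin.sum_card_Ioi n, ← prod_pow_eq_pow_sum, det_vandermonde, ← prod_pow,
    ← prod_mul_distrib]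
  simp_rw [← compl_singleton, ← prod_prod_Ioi_mul_eq_prod_prod_off_diag, ← prod_pow,
    ← prod_const, ← prod_mul_distrib]
  exact prod_congr rfl fun i _ => prod_congr rfl fun j _ => by ring

end

theorem Hdet_tauTilde_general (N : ℕ) (x : Fin N → ℂ)
    (hx : Function.Injective x) (y : Fin N → ℂ)
    (t : ℕ → ℂ) (ht : ∀ k, t k = ∑ j, x j ^ k / (y j * Wd x j)) :
    Hdet t N = (-1 : ℂ) ^ (N * (N - 1) / 2) / ∏ j, y j := by
  have hHankel : Hdet t N = (vandermonde x).det ^ 2 * ∏ j, (y j * Wd x j)⁻¹ := by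
    rw [Hdet, ← det_hankel_moments]
    simp only [ht, div_eq_inv_mul]
  have hWd : ∏ j, Wd x j = (-1) ^ (N * (N - 1) / 2) * (vandermonde x).det ^ 2 :=
    prod_prod_erase_sub_eq_det_vandermonde_sq x
  have hV : (vandermonde x).det ≠ 0 := det_vandermonde_ne_zero_iff.2 hx
  rw [hHankel, prod_inv_distrib, prod_mul_distrib, hWd]
  field_simp
  rw [← pow_mul, mul_comm, pow_mul, neg_one_sq, one_pow]

theorem Hdet_tauTilde (N : ℕ) (hN : 0 < N) (x : Fin N → ℂ)
    (hx : Function.Injective x) (y : Fin N → ℂ) (hy : ∀ j, y j ≠ 0)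
    (t : ℕ → ℂ) (ht : ∀ k, t k = ∑ j, x j ^ k / (y j * Wd x j)) :
    Hdet t N = (-1 : ℂ) ^ (N * (N - 1) / 2) / ∏ j, y j :=
  Hdet_tauTilde_general N x hx y t ht
end

section
/- Let x_1,...,x_N be distinct complex numbers, p(x) = p_0 x^n + ... + p_n a polynomial of degree n < N−1 with p_0 ≠ 0 and simple zeros, such that y_j := p(x_j) ≠ 0 for all j. Define τ̃_k = ∑_{j=1}^N x_j^k/(y_j W'(x_j)) where W(x)=∏(x−x_j). Then 𝓗_n(x;{τ̃}) ≡ ((−1)^{Nn + n(n+1)/2} p_0^{N−n−1} / ∏_{j=1}^N y_j) · p(x). -/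
open Finset Polynomial

theorem sum_pow_div_prod_sub_eq_zero {F ι : Type*} [Field F] [DecidableEq ι] {s : Finset ι}
    {v : ι → F} (hvs : Set.InjOn v s) {k : ℕ} (hk : k + 1 < #s) :
    ∑ i ∈ s, v i ^ k / ∏ j ∈ s.erase i, (v i - v j) = 0 := by
  have hdeg : ((X : F[X]) ^ k).degree < #s := by
    rw [degree_X_pow]
    exact_mod_cast (by omega : k < #s)
  simpa [coeff_X_pow, show #s - 1 ≠ k by omega] using (Lagrange.coeff_eq_sum hvs hdeg).symm

section SumType

variable {α β : Type*} [Fintype α] [Fintype β] [DecidableEq α] [DecidableEq β]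

theorem Finset.univ_erase_inl (a : α) :
    (univ : Finset (α ⊕ β)).erase (Sum.inl a) = (univ.erase a).disjSum univ := by
  ext (b | c) <;> simp

theorem Finset.univ_erase_inr (b : β) :
    (univ : Finset (α ⊕ β)).erase (Sum.inr b) = univ.disjSum (univ.erase b) := by
  ext (a | c) <;> simp

theorem sum_pow_div_prod_sub_eq_neg_sum {F : Type*} [Field F] (x : α → F) (r : β → F)
    (hxr : Function.Injective (Sum.elim x r)) {k : ℕ}
    (hk : k + 2 ≤ Fintype.card α + Fintype.card β) :
    ∑ a, x a ^ k / ((∏ b ∈ univ.erase a, (x a - x b)) * ∏ c, (x a - r c)) =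
      -∑ c, r c ^ k / ((∏ a, (r c - x a)) * ∏ d ∈ univ.erase c, (r c - r d)) := by
  have h := sum_pow_div_prod_sub_eq_zero (s := univ) hxr.injOn (k := k)
    (by rw [card_univ, Fintype.card_sum]; omega)
  simp only [Fintype.sum_sum_type, univ_erase_inl, univ_erase_inr, prod_disjSum, Sum.elim_inl,
    Sum.elim_inr] at h
  exact eq_neg_of_add_eq_zero_left h

end SumType

theorem Matrix.det_vandermonde_snoc {R : Type*} [CommRing R] {n : ℕ} (w : Fin n → R) (a : R) :
    (Matrix.vandermonde (Fin.snoc w a : Fin (n + 1) → R)).det =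
      (Matrix.vandermonde w).det * ∏ i, (a - w i) := by
  have hIoi : ∀ i : Fin n,
      Ioi i.castSucc = cons (Fin.last n) ((Ioi i).map Fin.castSuccEmb) (by simp) := by
    intro i
    rw [cons_eq_insert, Fin.map_castSuccEmb_Ioi, Ioo_insert_right (Fin.castSucc_lt_last i)]
    rfl
  rw [Matrix.det_vandermonde, Matrix.det_vandermonde, Fin.prod_univ_castSucc, ← Fin.top_eq_last,
    Ioi_top, prod_empty, mul_one, ← prod_mul_distrib]
  refine prod_congr rfl fun i _ => ?_
  rw [hIoi, prod_cons, prod_map]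
  simp [mul_comm]

theorem prod_prod_erase_sub_eq_det_vandermonde_sq_s14 {R : Type*} [CommRing R] {n : ℕ}
    (r : Fin n → R) :
    ∏ c, ∏ d ∈ univ.erase c, (r c - r d) =
      (-1) ^ n.choose 2 * (Matrix.vandermonde r).det ^ 2 := by
  have hupper : ∏ c, ∏ d ∈ Ioi c, (r c - r d) =
      (-1) ^ n.choose 2 * (Matrix.vandermonde r).det := by
    have hcard : ∑ c : Fin n, #(Ioi c) = n.choose 2 := by
      simp_rw [Fin.card_Ioi]
      rw [Fin.sum_univ_eq_sum_range (fun i => n - 1 - i), sum_range_reflect (fun j => j) n,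
        sum_range_id, Nat.choose_two_right]
    rw [Matrix.det_vandermonde, ← hcard, ← prod_pow_eq_pow_sum, ← prod_mul_distrib]
    exact prod_congr rfl fun c _ => by rw [← prod_neg]; simp
  have hlower : ∏ c, ∏ d ∈ Iio c, (r c - r d) = (Matrix.vandermonde r).det := by
    rw [Matrix.det_vandermonde]
    exact prod_comm' (by simp)
  have herase : ∀ c : Fin n, univ.erase c = Ioi c ∪ Iio c := by
    intro c
    ext d
    simp [lt_or_lt_iff_ne, ne_comm]
  rw [sq, ← mul_assoc, ← hupper, ← hlower, ← prod_mul_distrib]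
  refine prod_congr rfl fun c _ => ?_
  rw [herase, prod_union (disjoint_left.2 fun d h h' => lt_asymm (mem_Ioi.1 h) (mem_Iio.1 h'))]

theorem Hpoly_eq_C_mul_prod_X_sub_C {n : ℕ} (t : ℕ → ℂ) (v r : Fin n → ℂ)
    (ht : ∀ k < 2 * n, t k = ∑ c, v c * r c ^ k) :
    Hpoly t n = C ((∏ c, v c) * (Matrix.vandermonde r).det ^ 2) * ∏ c, (X - C (r c)) := by
  -- block diagonal: `Vᵀ * diagonal v` in the top left corner, `1` in the bottom right one
  let B : Matrix (Fin (n + 1)) (Fin (n + 1)) ℂ := Matrix.of fun i j =>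
    Fin.lastCases (Fin.lastCases 1 (fun _ => 0) j)
      (fun i' => Fin.lastCases 0 (fun j' => v j' * r j' ^ (i' : ℕ)) j) i
  have hfactor : Matrix.of (fun i j : Fin (n + 1) =>
        if (i : ℕ) < n then C (t (i + j)) else (X : ℂ[X]) ^ (j : ℕ)) =
      C.mapMatrix B * Matrix.vandermonde (Fin.snoc (fun c => C (r c)) X) := by
    ext1 i j
    induction i using Fin.lastCases with
    | last => simp [Matrix.mul_apply, Fin.sum_univ_castSucc, B]
    | cast i =>
      have hij : (i : ℕ) + j < 2 * n := by omega
      simp [Matrix.mul_apply, Fin.sum_univ_castSucc, B, ht _ hij, map_sum, pow_add, mul_assoc]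
  have hB : B.det = (∏ c, v c) * (Matrix.vandermonde r).det := by
    have hminor : B.submatrix Fin.castSucc Fin.castSucc =
        (Matrix.vandermonde r).transpose * Matrix.diagonal v := by
      ext i j
      simp [B, mul_comm]
    rw [Matrix.det_succ_row B (Fin.last n), Fin.sum_univ_castSucc]
    simp [B, Fin.succAbove_last, hminor, mul_comm]
  have hV : (Matrix.vandermonde fun c => C (r c)).det = C (Matrix.vandermonde r).det := by
    simp [Matrix.det_vandermonde, map_prod]
  rw [Hpoly, hfactor, Matrix.det_mul, ← RingHom.map_det, hB, Matrix.det_vandermonde_snoc, hV,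
    ← mul_assoc, ← map_mul, mul_assoc, ← sq]

theorem exists_injective_eq_C_leadingCoeff_mul_prod_X_sub_C {K : Type*} [Field K]
    [IsAlgClosed K] {p : K[X]} {n : ℕ} (hdeg : p.natDegree = n) (hp : p.roots.Nodup) :
    ∃ r : Fin n → K, Function.Injective r ∧ p = C p.leadingCoeff * ∏ i, (X - C (r i)) := by
  subst hdeg
  let s : Finset K := ⟨p.roots, hp⟩
  let e : s ≃ Fin p.natDegree := s.equivFinOfCardEq IsAlgClosed.card_roots_eq_natDegree
  refine ⟨fun i => e.symm i, Subtype.val_injective.comp e.symm.injective, ?_⟩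
  rw [e.symm.prod_comp (fun z : s => X - C (z : K)), prod_coe_sort s (fun z => X - C z),
    prod_eq_multiset_prod]
  exact (C_leadingCoeff_mul_prod_multiset_X_sub_C IsAlgClosed.card_roots_eq_natDegree).symm

section RootWeight

variable {F : Type*} [Field F] {N n : ℕ}

-- `-1 / (p'(r_c) W(r_c))` for `p = p₀ ∏_c (X - r_c)` and `W = ∏_a (X - x_a)`
noncomputable def rootWeight (x : Fin N → F) (r : Fin n → F) (p₀ : F) (c : Fin n) : F :=
  -(p₀ * ((∏ a, (r c - x a)) * ∏ d ∈ univ.erase c, (r c - r d)))⁻¹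

theorem sum_pow_div_eq_sum_rootWeight_mul_pow (x : Fin N → F) (r : Fin n → F)
    (hxr : Function.Injective (Sum.elim x r)) (p₀ : F) {k : ℕ} (hk : k + 2 ≤ N + n) :
    ∑ a, x a ^ k / ((p₀ * ∏ c, (x a - r c)) * ∏ b ∈ univ.erase a, (x a - x b)) =
      ∑ c, rootWeight x r p₀ c * r c ^ k := calc
  _ = p₀⁻¹ *
      ∑ a, x a ^ k / ((∏ b ∈ univ.erase a, (x a - x b)) * ∏ c, (x a - r c)) := by
    rw [mul_sum]
    exact sum_congr rfl fun a _ => by ring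
  _ = ∑ c, rootWeight x r p₀ c * r c ^ k := by
    rw [sum_pow_div_prod_sub_eq_neg_sum x r hxr (by simpa using hk), mul_neg, mul_sum,
      ← sum_neg_distrib]
    exact sum_congr rfl fun c _ => by rw [rootWeight]; ring

theorem prod_rootWeight_mul_det_vandermonde_sq (hnN : n + 1 ≤ N) {x : Fin N → F}
    {r : Fin n → F} (hr : Function.Injective r) (hxr : ∀ a c, x a ≠ r c) {p₀ : F}
    (hp₀ : p₀ ≠ 0) :
    (∏ c, rootWeight x r p₀ c) * (Matrix.vandermonde r).det ^ 2 =
      (-1) ^ (N * n + n * (n + 1) / 2) * p₀ ^ (N - n - 1) / (∏ a, p₀ * ∏ c, (x a - r c)) *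
        p₀ := by
  have hD : (Matrix.vandermonde r).det ≠ 0 := Matrix.det_vandermonde_ne_zero_iff.mpr hr
  have hP : ∏ a, ∏ c, (x a - r c) ≠ 0 :=
    prod_ne_zero_iff.mpr fun a _ => prod_ne_zero_iff.mpr fun c _ => sub_ne_zero.mpr (hxr a c)
  have hcross : ∏ c, ∏ a, (r c - x a) = (-1) ^ (n * N) * ∏ a, ∏ c, (x a - r c) := calc
    ∏ c, ∏ a, (r c - x a) = ∏ a, ∏ c, -(x a - r c) := by rw [prod_comm]; simp_rw [neg_sub]
    _ = (-1) ^ (n * N) * ∏ a, ∏ c, (x a - r c) := by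
      simp_rw [prod_neg, prod_mul_distrib, prod_const, card_univ, Fintype.card_fin, ← pow_mul]
  have hweights : ∏ c, rootWeight x r p₀ c = (-1) ^ n * (p₀ ^ n * (((-1) ^ (n * N) *
      ∏ a, ∏ c, (x a - r c)) * ((-1) ^ n.choose 2 * (Matrix.vandermonde r).det ^ 2)))⁻¹ := by
    simp only [rootWeight]
    rw [prod_neg, prod_inv_distrib, prod_mul_distrib, prod_mul_distrib, prod_const, hcross,
      prod_prod_erase_sub_eq_det_vandermonde_sq_s14, card_univ, Fintype.card_fin]
  have hexp : N * n + n * (n + 1) / 2 = n + n * N + n.choose 2 := by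
    rw [show n * (n + 1) / 2 = (n + 1).choose 2 by rw [Nat.choose_two_right, mul_comm]; rfl,
      Nat.choose_succ_succ', Nat.choose_one_right]
    ring
  have hpow : p₀ ^ N = p₀ ^ (N - n - 1) * p₀ ^ n * p₀ := by
    rw [mul_assoc, ← pow_succ, ← pow_add]
    congr 1
    omega
  rw [hweights, prod_mul_distrib, prod_const, card_univ, Fintype.card_fin, hexp, hpow, pow_add,
    pow_add]
  field_simp
  simp [← pow_mul]

end RootWeight

theorem hankel_poly_n_of_redundant_table (N n : ℕ) (hn : n + 1 < N)
    (x : Fin N → ℂ) (hx : Function.Injective x)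
    (p : Polynomial ℂ) (hpdeg : p.natDegree = n) (hp0 : p.leadingCoeff ≠ 0)
    (hsimple : p.roots.Nodup)
    (y : Fin N → ℂ) (hy : ∀ j, y j = p.eval (x j)) (hy0 : ∀ j, y j ≠ 0)
    (t : ℕ → ℂ) (ht : ∀ k, t k = ∑ j, x j ^ k / (y j * Wd x j)) :
    Hpoly t n =
      C ((-1 : ℂ) ^ (N * n + n * (n + 1) / 2) * p.leadingCoeff ^ (N - n - 1) /
          ∏ j, y j) * p := by
  obtain ⟨r, hr, hp⟩ := exists_injective_eq_C_leadingCoeff_mul_prod_X_sub_C hpdeg hsimple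
  set p₀ := p.leadingCoeff
  have hyr : ∀ a, y a = p₀ * ∏ c, (x a - r c) := fun a => by
    rw [hy, hp]
    simp [eval_prod]
  have hxr : ∀ a c, x a ≠ r c := fun a c h =>
    hy0 a (by rw [hyr, prod_eq_zero (mem_univ c) (sub_eq_zero.2 h), mul_zero])
  have hmom : ∀ k < 2 * n, t k = ∑ c, rootWeight x r p₀ c * r c ^ k := fun k hk => by
    simp_rw [ht, hyr]
    exact sum_pow_div_eq_sum_rootWeight_mul_pow x r (hx.sumElim hr hxr) p₀ (k := k) (by omega)
  conv_rhs => rw [hp, ← mul_assoc, ← map_mul]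
  rw [Hpoly_eq_C_mul_prod_X_sub_C t _ r hmom, prod_congr rfl fun a _ => hyr a,
    prod_rootWeight_mul_det_vandermonde_sq hn.le hr hxr hp0]
end

section
/- Let x_1,...,x_N be distinct, p(x) of degree n < N−2 with simple zeros, y_j nonzero with y_j = p(x_j) for all j ≠ e and y_e ≠ p(x_e) =: ŷ_e ≠ 0 for exactly one index e, and suppose n < N−2. Define τ_k = ∑_{j=1}^N y_j x_j^k / W'(x_j), W(x) = ∏(x − x_j). Then 𝓗_1(x;{τ}) ≡ ((y_e − ŷ_e)/W'(x_e)) · (x − x_e). -/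
open Finset Polynomial

/-!
The sum `∑ⱼ q(xⱼ) / W'(xⱼ)` is the coefficient of `x^(N-1)` in the Lagrange interpolant of `q`,
so it vanishes whenever `deg q < N - 1`. For `k ≤ 1` the moment `τ_k` is such a sum for
`q = p xᵏ` (of degree `n + k < N - 1`) up to the single error term at `x_e`, hence
`τ_k = c x_eᵏ` with `c = (y_e - p(x_e)) / W'(x_e)`, and `𝓗₁ = τ₀ x - τ₁ = c (x - x_e)`.
-/

lemma coeff_eq_sum_eval_div_Wd {N : ℕ} {x : Fin N → ℂ} (hx : Function.Injective x)
    {q : ℂ[X]} (hq : q.degree < N) :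
    q.coeff (N - 1) = ∑ j, q.eval (x j) / Wd x j := by
  simpa [Wd] using Lagrange.coeff_eq_sum (s := univ) hx.injOn (by simpa using hq)

lemma sum_eval_div_Wd_eq_zero {N : ℕ} {x : Fin N → ℂ} (hx : Function.Injective x)
    {q : ℂ[X]} (hq : q.degree < ↑(N - 1)) :
    ∑ j, q.eval (x j) / Wd x j = 0 := by
  have hqN : q.degree < N := hq.trans_le (by exact_mod_cast N.sub_le 1)
  rw [← coeff_eq_sum_eval_div_Wd hx hqN, coeff_eq_zero_of_degree_lt hq]

lemma sum_div_Wd_eq_of_eq_eval_of_ne {N : ℕ} {x : Fin N → ℂ} (hx : Function.Injective x)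
    {q : ℂ[X]} (hq : q.degree < ↑(N - 1)) {f : Fin N → ℂ} {e : Fin N}
    (hf : ∀ j, j ≠ e → f j = q.eval (x j)) :
    ∑ j, f j / Wd x j = (f e - q.eval (x e)) / Wd x e :=
  calc ∑ j, f j / Wd x j
      = ∑ j, q.eval (x j) / Wd x j + ∑ j, (f j - q.eval (x j)) / Wd x j := by
        rw [← sum_add_distrib]
        exact sum_congr rfl fun j _ => by ring
    _ = (f e - q.eval (x e)) / Wd x e := by
        rw [sum_eval_div_Wd_eq_zero hx hq, zero_add]
        exact Fintype.sum_eq_single e fun j hj => by rw [hf j hj, sub_self, zero_div]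

lemma Hpoly_one (c : ℕ → ℂ) : Hpoly c 1 = C (c 0) * X - C (c 1) := by
  simp [Hpoly, Matrix.det_fin_two]

theorem hankel_poly_one_error_locator_general (N n : ℕ) (hn : n + 2 < N)
    (x : Fin N → ℂ) (hx : Function.Injective x)
    (p : Polynomial ℂ) (hpdeg : p.natDegree = n)
    (e : Fin N) (y : Fin N → ℂ)
    (hy : ∀ j, j ≠ e → y j = p.eval (x j))
    (t : ℕ → ℂ) (ht : ∀ k, t k = ∑ j, y j * x j ^ k / Wd x j) :
    Hpoly t 1 = C ((y e - p.eval (x e)) / Wd x e) * (X - C (x e)) := by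
  set c := (y e - p.eval (x e)) / Wd x e
  have moment : ∀ k ≤ 1, t k = c * x e ^ k := by
    intro k hk
    have hnatDeg : (p * X ^ k).natDegree < N - 1 :=
      (natDegree_mul_le.trans (by rw [hpdeg, natDegree_X_pow])).trans_lt (by omega)
    have hdeg : (p * X ^ k).degree < ↑(N - 1) :=
      degree_le_natDegree.trans_lt (by exact_mod_cast hnatDeg)
    rw [ht k, sum_div_Wd_eq_of_eq_eval_of_ne hx hdeg fun j hj => by simp [hy j hj]]
    simp only [c, eval_mul, eval_pow, eval_X]
    ring
  rw [Hpoly_one, moment 0 zero_le_one, moment 1 le_rfl, pow_zero, mul_one, pow_one, C_mul,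
    mul_sub]

theorem hankel_poly_one_error_locator (N n : ℕ) (hn : n + 2 < N)
    (x : Fin N → ℂ) (hx : Function.Injective x)
    (p : Polynomial ℂ) (hpdeg : p.natDegree = n) (hp0 : p.leadingCoeff ≠ 0)
    (hsimple : p.roots.Nodup)
    (e : Fin N) (y : Fin N → ℂ) (hy0 : ∀ j, y j ≠ 0)
    (hy : ∀ j, j ≠ e → y j = p.eval (x j))
    (he : y e ≠ p.eval (x e)) (he0 : p.eval (x e) ≠ 0)
    (t : ℕ → ℂ) (ht : ∀ k, t k = ∑ j, y j * x j ^ k / Wd x j) :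
    Hpoly t 1 = C ((y e - p.eval (x e)) / Wd x e) * (X - C (x e)) :=
  hankel_poly_one_error_locator_general N n hn x hx p hpdeg e y hy t ht
end

section
/- Let p(x) = p_0 x^n + ... + p_n and q(x) = q_0 x^m + ... + q_m with p_0 ≠ 0, q_0 ≠ 0, and let x_1,...,x_N with N = m+n+1 be distinct points where p(x_j) ≠ 0 and q(x_j) ≠ 0 for all j. Define τ̃_k = ∑_{j=1}^N (q(x_j)/p(x_j)) · x_j^k / W'(x_j), W(x) = ∏(x − x_j). Then the Hankel determinant H_n({τ̃}) = det[τ̃_{i+j−2}]_{i,j=1}^n equals ((−1)^{mn + n(n+1)/2} p_0 / ∏_{j=1}^N p(x_j)) · Res(p, q), where Res(p,q) is the resultant of p and q. -/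
/-!
Normalise `p` to the monic `P = p / p₀` and let `W = ∏ (X - x_j)`. Since `P` has no zero at the
nodes, `W` is invertible modulo `P`: `b W ≡ 1 [P]`. Write `q X^k = B_k W + P A_k` with
`B_k = q b X^k mod P`. For `k ≤ 2n - 2` we have `deg A_k < N`, so Lagrange interpolation of `A_k`
at the nodes and a comparison of top coefficients give `τ̃_k = p₀⁻¹ (A_k)_{N-1} = -p₀⁻¹ ℓ(q b X^k)`,
where `ℓ` reads off the coefficient of `X^(n-1)` in `ℂ[X]/(P)`.
So the Hankel matrix is the Gram matrix of `(y, z) ↦ ℓ(y z u)`, `u = q b`, in the basis of powers of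
`X`; it factors as the Gram matrix of `ℓ(y z)`, anti-triangular with unit anti-diagonal, times the
matrix of multiplication by `u`, whose determinant is the norm `∏ u(λ)` over the roots of `P`.
Finally `u(λ) W(λ) = q(λ)` and `∏ W(λ) = ± ∏ P(x_j)`.
-/

open Finset Polynomial

/-- The resultant of `p` and `q` over `ℂ`:
`Res(p,q) = p₀^m ∏ q(λ)` over the roots `λ` of `p` counted with multiplicity. -/
noncomputable def Res (p q : Polynomial ℂ) : ℂ :=
  p.leadingCoeff ^ q.natDegree * (p.roots.map fun l => q.eval l).prod

theorem Hdet_congr {c d : ℕ → ℂ} {n : ℕ} (h : ∀ k, k + 2 ≤ 2 * n → c k = d k) :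
    Hdet c n = Hdet d n := by
  unfold Hdet
  congr 1
  ext i j
  exact h _ (by omega)

theorem Hdet_const_mul (a : ℂ) (c : ℕ → ℂ) (n : ℕ) :
    Hdet (fun k => a * c k) n = a ^ n * Hdet c n := by
  unfold Hdet
  rw [show (Matrix.of fun i j : Fin n => a * c (i + j)) = a • Matrix.of fun i j : Fin n => c (i + j)
    from rfl, Matrix.det_smul, Fintype.card_fin]

theorem Hdet_eq_neg_one_pow {c : ℕ → ℂ} {n : ℕ} (hc : ∀ k < n, c k = if k + 1 = n then 1 else 0) :
    Hdet c n = (-1) ^ (n * (n - 1) / 2) := by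
  induction n generalizing c with
  | zero => simp [Hdet]
  | succ n ih =>
    have hminor : (Matrix.of fun i j : Fin (n + 1) => c (i + j)).submatrix Fin.succ
        (Fin.last n).succAbove = Matrix.of fun i j : Fin n => c (i + j + 1) := by
      ext i j
      simp only [Matrix.submatrix_apply, Fin.succAbove_last, Matrix.of_apply, Fin.val_succ,
        Fin.val_castSucc]
      congr 1
      omega
    have hexp : (n + 1) * n / 2 = n * (n - 1) / 2 + n := by simpa using Nat.triangle_succ n
    have hshift := ih (c := fun k => c (k + 1)) fun k hk => by simpa using hc (k + 1) (by omega)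
    rw [Hdet] at hshift
    rw [Hdet, Matrix.det_succ_row_zero, Finset.sum_eq_single (Fin.last n)]
    · rw [hminor, hshift, Nat.add_sub_cancel, hexp]
      simp [hc n, pow_add]
      ring
    · intro j _ hj
      simp [hc j j.isLt, (Fin.val_lt_last hj).ne]
    · simp

theorem AdjoinRoot.norm_mk_X_sub_C {K : Type*} [Field K] {P : K[X]} (hP : P.Monic) (μ : K) :
    Algebra.norm K (AdjoinRoot.mk P (X - C μ)) = (-1) ^ P.natDegree * P.eval μ := by
  set pb := AdjoinRoot.powerBasis' hP
  have hchar : (Algebra.leftMulMatrix pb.basis pb.gen).charpoly = P := by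
    rw [charpoly_leftMulMatrix, AdjoinRoot.powerBasis'_gen, AdjoinRoot.minpoly_root hP.ne_zero,
      hP.leadingCoeff, inv_one, C_1, mul_one]
  have heval := Matrix.eval_charpoly (Algebra.leftMulMatrix pb.basis pb.gen) μ
  rw [hchar] at heval
  rw [heval, Algebra.norm_eq_matrix_det pb.basis, map_sub,
    AdjoinRoot.mk_X, AdjoinRoot.mk_C, map_sub, ← neg_sub, Matrix.det_neg, Fintype.card_fin]
  congr 3
  exact (AlgHom.commutes _ _).trans (Matrix.algebraMap_eq_diagonal _)

theorem AdjoinRoot.norm_mk_eq_prod_roots {K : Type*} [Field K] [IsAlgClosed K] {P : K[X]}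
    (hP : P.Monic) (f : K[X]) :
    Algebra.norm K (AdjoinRoot.mk P f) = (P.roots.map f.eval).prod := by
  have hProots : P.roots.card = P.natDegree := (IsAlgClosed.splits P).natDegree_eq_card_roots.symm
  have hf := (IsAlgClosed.splits f).eq_prod_roots
  have hnorm_C : Algebra.norm K (AdjoinRoot.mk P (C f.leadingCoeff)) =
      f.leadingCoeff ^ P.natDegree := by
    rw [AdjoinRoot.mk_C, ← AdjoinRoot.algebraMap_eq ..,
      Algebra.norm_algebraMap_of_basis (AdjoinRoot.powerBasis' hP).basis, Fintype.card_fin]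
    rfl
  calc Algebra.norm K (AdjoinRoot.mk P f)
      = f.leadingCoeff ^ P.natDegree *
          ((-1) ^ (f.roots.card * P.roots.card) * (f.roots.map P.eval).prod) := by
        conv_lhs => rw [hf]
        simp only [map_mul, hnorm_C, map_multiset_prod, Multiset.map_map, Function.comp_def,
          AdjoinRoot.norm_mk_X_sub_C hP, Multiset.prod_map_mul, Multiset.map_const',
          Multiset.prod_replicate, hProots]
        ring
    _ = f.leadingCoeff ^ P.natDegree * ((P.roots ×ˢ f.roots).map fun ij => ij.1 - ij.2).prod := by
        rw [map_sub_roots_sprod_eq_prod_map_eval _ _ hP (IsAlgClosed.splits P)]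
    _ = (P.roots.map f.eval).prod := by
        conv_rhs => rw [hf]
        simp only [eval_mul, eval_C, eval_multiset_prod, Multiset.map_map, Function.comp_def,
          eval_sub, eval_X, Multiset.prod_map_mul, Multiset.map_const', Multiset.prod_replicate,
          hProots,
          Multiset.prod_map_product_eq_prod_prod]

theorem Hdet_coeff_X_pow_mul_modByMonic {P : ℂ[X]} (hP : P.Monic) (u : ℂ[X]) :
    Hdet (fun k => ((X ^ k * u) %ₘ P).coeff (P.natDegree - 1)) P.natDegree =
      (-1) ^ (P.natDegree * (P.natDegree - 1) / 2) * (P.roots.map u.eval).prod := by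
  set b := AdjoinRoot.powerBasisAux' hP
  have hb : ∀ i, b i = AdjoinRoot.root P ^ (i : ℕ) := (AdjoinRoot.powerBasis' hP).basis_eq_pow
  set φ : AdjoinRoot P →ₗ[ℂ] ℂ :=
    (lcoeff ℂ (P.natDegree - 1)).comp (AdjoinRoot.modByMonicHom hP)
  have hφ : ∀ g, φ (AdjoinRoot.mk P g) = (g %ₘ P).coeff (P.natDegree - 1) := fun g => by
    simp [φ, AdjoinRoot.modByMonicHom_mk]
  set G := Algebra.leftMulMatrix b (AdjoinRoot.mk P u)
  have hG : ∀ j : Fin P.natDegree, AdjoinRoot.mk P u * AdjoinRoot.root P ^ (j : ℕ) =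
      ∑ l, G l j • AdjoinRoot.root P ^ (l : ℕ) := by
    intro j
    simp only [← hb, G, Algebra.leftMulMatrix_eq_repr_mul]
    exact (b.sum_repr _).symm
  have hfactor : (Matrix.of fun i j : Fin P.natDegree =>
        ((X ^ (i + j : ℕ) * u) %ₘ P).coeff (P.natDegree - 1)) =
      (Matrix.of fun i l : Fin P.natDegree =>
        ((X ^ (i + l : ℕ)) %ₘ P).coeff (P.natDegree - 1)) * G := by
    ext i j
    have hmk : AdjoinRoot.mk P (X ^ (i + j : ℕ) * u) =
        AdjoinRoot.root P ^ (i : ℕ) * (AdjoinRoot.mk P u * AdjoinRoot.root P ^ (j : ℕ)) := by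
      simp only [map_mul, map_pow, AdjoinRoot.mk_X, pow_add]
      ring
    rw [Matrix.of_apply, Matrix.mul_apply, ← hφ, hmk, hG j, Finset.mul_sum, map_sum]
    refine Finset.sum_congr rfl fun l _ => ?_
    rw [mul_smul_comm, map_smul, ← pow_add, ← AdjoinRoot.mk_X, ← map_pow, hφ, smul_eq_mul,
      mul_comm]
    rfl
  have hc : ∀ k < P.natDegree,
      (X ^ k %ₘ P).coeff (P.natDegree - 1) = if k + 1 = P.natDegree then 1 else 0 := by
    intro k hk
    rw [(modByMonic_eq_self_iff hP).mpr, coeff_X_pow]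
    · exact if_congr (by omega) rfl rfl
    · rw [degree_X_pow, degree_eq_natDegree hP.ne_zero]
      exact_mod_cast hk
  have hT := Hdet_eq_neg_one_pow hc
  rw [Hdet] at hT
  rw [Hdet, hfactor, Matrix.det_mul, hT, ← Algebra.norm_eq_matrix_det,
    AdjoinRoot.norm_mk_eq_prod_roots hP]

theorem Lagrange.isCoprime_nodal {K ι : Type*} [Field K] {s : Finset ι} {v : ι → K} {P : K[X]}
    (h : ∀ i ∈ s, ¬ P.IsRoot (v i)) : IsCoprime P (Lagrange.nodal s v) := by
  rw [Lagrange.nodal_eq]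
  exact IsCoprime.prod_right fun i hi =>
    ((irreducible_X_sub_C (v i)).coprime_iff_not_dvd.mpr (mt dvd_iff_isRoot.mp (h i hi))).symm

theorem Lagrange.prod_roots_eval_nodal {K ι : Type*} [Field K] (s : Finset ι) (v : ι → K)
    {P : K[X]} (hP : P.Monic) (hPs : P.Splits) :
    (P.roots.map (Lagrange.nodal s v).eval).prod =
      (-1) ^ (#s * P.natDegree) * ∏ i ∈ s, P.eval (v i) := by
  have := map_sub_roots_sprod_eq_prod_map_eval (s.val.map v) P hP hPs
  rw [Multiset.prod_map_product_eq_prod_prod, Multiset.card_map, ← hPs.natDegree_eq_card_roots,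
    Multiset.map_map] at this
  convert this using 3
  · simp only [Lagrange.eval_nodal, Multiset.map_map, Function.comp_def,
      Finset.prod_eq_multiset_prod]
  · rfl
  · rfl

theorem sum_eval_div_eval_div_Wd {N : ℕ} {x : Fin N → ℂ} (hx : Function.Injective x)
    (hN : 0 < N) {P a b : ℂ[X]} (hP : P.Monic) (hP0 : 0 < P.natDegree)
    (hab : a * P + b * Lagrange.nodal univ x = 1) {f : ℂ[X]}
    (hf : f.natDegree + 2 ≤ N + P.natDegree) :
    ∑ j, f.eval (x j) / P.eval (x j) / Wd x j = -((f * b) %ₘ P).coeff (P.natDegree - 1) := by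
  set n := P.natDegree
  set W := Lagrange.nodal univ x
  have hA : f - (f * b %ₘ P) * W = P * (f * a + (f * b /ₘ P) * W) := by
    rw [modByMonic_eq_sub_mul_div (f * b) P]
    linear_combination (-f) * hab
  set B := f * b %ₘ P
  set A := f * a + (f * b /ₘ P) * W
  have hWx : ∀ j, W.eval (x j) = 0 := fun j => Lagrange.eval_nodal_at_node (mem_univ j)
  have hWdeg : W.natDegree = N := by simp [W, Lagrange.natDegree_nodal]
  have hWtop : W.coeff N = 1 := by
    rw [← hWdeg]
    exact Lagrange.nodal_monic.coeff_natDegree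
  have hBdeg : B.natDegree < n :=
    natDegree_modByMonic_lt _ hP fun h => by simp [n, h] at hP0
  have hAeval : ∀ j, f.eval (x j) / P.eval (x j) = A.eval (x j) := by
    intro j
    have hPx : P.eval (x j) ≠ 0 := by
      intro h
      simpa [hWx j, h] using congrArg (eval (x j)) hab
    rw [div_eq_iff hPx, mul_comm]
    simpa [hWx j] using congrArg (eval (x j)) hA
  have hsub_deg : (f - B * W).natDegree ≤ N + n - 1 := by
    refine (natDegree_sub_le _ _).trans (max_le (by omega) (natDegree_mul_le.trans ?_))
    omega
  have hAdeg : A.natDegree ≤ N - 1 := by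
    rcases eq_or_ne A 0 with h | h
    · simp [h]
    · have := hP.natDegree_mul' h
      rw [← hA] at this
      omega
  have htop : A.coeff (N - 1) = -B.coeff (n - 1) := by
    have := congrArg (coeff · (n + (N - 1))) hA
    simp only [coeff_sub] at this
    rw [coeff_mul_add_eq_of_natDegree_le le_rfl hAdeg, hP.coeff_natDegree,
      coeff_eq_zero_of_natDegree_lt (by omega), show n + (N - 1) = n - 1 + N by omega,
      coeff_mul_add_eq_of_natDegree_le (by omega) hWdeg.le, hWtop] at this
    linear_combination -this
  have hLagrange := Lagrange.coeff_eq_sum (s := univ) (v := x) hx.injOn (P := A)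
    (degree_le_natDegree.trans_lt
      (by rw [card_univ, Fintype.card_fin]; exact_mod_cast (by omega)))
  rw [card_univ, Fintype.card_fin] at hLagrange
  simp only [hAeval]
  rw [← htop, hLagrange]
  rfl

theorem Hdet_eq_prod_roots_div_prod_eval {N n : ℕ} {x : Fin N → ℂ} (hx : Function.Injective x)
    {P q : ℂ[X]} (hP : P.Monic) (hPn : P.natDegree = n) (hPx : ∀ j, P.eval (x j) ≠ 0)
    (hq : q.natDegree + n ≤ N) :
    Hdet (fun k => ∑ j, q.eval (x j) / P.eval (x j) * x j ^ k / Wd x j) n =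
      (-1) ^ (n * (n + 1) / 2 + N * n) * (P.roots.map q.eval).prod / ∏ j, P.eval (x j) := by
  subst hPn
  set W := Lagrange.nodal univ x
  obtain ⟨a, b, hab⟩ : IsCoprime P W := Lagrange.isCoprime_nodal fun j _ => hPx j
  have hmoment : ∀ k, k + 2 ≤ 2 * P.natDegree →
      ∑ j, q.eval (x j) / P.eval (x j) * x j ^ k / Wd x j =
        -1 * ((X ^ k * (q * b)) %ₘ P).coeff (P.natDegree - 1) := by
    intro k hk
    have hf : (q * X ^ k).natDegree + 2 ≤ N + P.natDegree := by
      have := natDegree_mul_le (p := q) (q := X ^ k)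
      rw [natDegree_X_pow] at this
      omega
    have := sum_eval_div_eval_div_Wd hx (by omega) hP (by omega) hab hf
    rw [show q * X ^ k * b = X ^ k * (q * b) by ring] at this
    rw [neg_one_mul, ← this]
    simp only [eval_mul, eval_pow, eval_X, div_mul_eq_mul_div]
  have hroots : (P.roots.map (q * b).eval).prod * (P.roots.map W.eval).prod =
      (P.roots.map q.eval).prod := by
    rw [← Multiset.prod_map_mul]
    refine congrArg _ (Multiset.map_congr rfl fun z hz => ?_)
    have := congrArg (eval z) hab
    simp only [eval_add, eval_mul, (isRoot_of_mem_roots hz).eq_zero, eval_one] at this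
    simp only [eval_mul]
    linear_combination q.eval z * this
  have hW := Lagrange.prod_roots_eval_nodal univ x hP (IsAlgClosed.splits P)
  rw [card_univ, Fintype.card_fin] at hW
  have hPx' : ∏ j, P.eval (x j) ≠ 0 := prod_ne_zero_iff.mpr fun j _ => hPx j
  have hsign : (-1 : ℂ) ^ (P.natDegree * (P.natDegree + 1) / 2) =
      (-1) ^ (P.natDegree * (P.natDegree - 1) / 2) * (-1) ^ P.natDegree := by
    rw [← pow_add, ← Nat.triangle_succ, Nat.add_sub_cancel, Nat.mul_comm (P.natDegree + 1)]
  have hsq : ((-1 : ℂ) ^ (N * P.natDegree)) ^ 2 = 1 := by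
    rw [← pow_mul, mul_comm, pow_mul, neg_one_sq, one_pow]
  rw [Hdet_congr hmoment, Hdet_const_mul, Hdet_coeff_X_pow_mul_modByMonic hP, ← hroots, hW,
    pow_add, hsign]
  generalize (-1 : ℂ) ^ (N * P.natDegree) = s at hsq
  field_simp
  rw [hsq, mul_one]

theorem hankel_det_eq_resultant_general (n m N : ℕ) (hN : N = m + n + 1)
    (p q : Polynomial ℂ) (hpdeg : p.natDegree = n) (hqdeg : q.natDegree = m)
    (hp0 : p.leadingCoeff ≠ 0)
    (x : Fin N → ℂ) (hx : Function.Injective x)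
    (hpx : ∀ j, p.eval (x j) ≠ 0)
    (t : ℕ → ℂ)
    (ht : ∀ k, t k = ∑ j, (q.eval (x j) / p.eval (x j)) * x j ^ k / Wd x j) :
    Hdet t n =
      (-1 : ℂ) ^ (m * n + n * (n + 1) / 2) * p.leadingCoeff /
          (∏ j, p.eval (x j)) * Res p q := by
  subst hN
  rw [Res, hqdeg]
  set c := p.leadingCoeff
  set P := C c⁻¹ * p
  have hP : P.Monic := by
    simpa [P, mul_comm] using monic_mul_leadingCoeff_inv (leadingCoeff_ne_zero.mp hp0)
  have hpP : ∀ z, p.eval z = c * P.eval z := fun z => by simp [P, hp0]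
  have hPx : ∀ j, P.eval (x j) ≠ 0 := fun j => right_ne_zero_of_mul (hpP _ ▸ hpx j)
  have ht' : t = fun k => c⁻¹ * ∑ j, q.eval (x j) / P.eval (x j) * x j ^ k / Wd x j := by
    ext k
    rw [ht, mul_sum]
    refine sum_congr rfl fun j _ => ?_
    rw [hpP]
    field_simp
  have hsign : (-1 : ℂ) ^ (n * (n + 1) / 2 + (m + n + 1) * n) =
      (-1) ^ (m * n + n * (n + 1) / 2) := by
    rw [show n * (n + 1) / 2 + (m + n + 1) * n = m * n + n * (n + 1) / 2 + n * (n + 1) by ring,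
      pow_add, (Nat.even_mul_succ_self n).neg_one_pow, mul_one]
  rw [ht', Hdet_const_mul, Hdet_eq_prod_roots_div_prod_eval hx hP
    (by rw [natDegree_C_mul (inv_ne_zero hp0), hpdeg]) hPx (by omega), hsign,
    roots_C_mul _ (inv_ne_zero hp0)]
  have hPprod : ∏ j, P.eval (x j) ≠ 0 := prod_ne_zero_iff.mpr fun j _ => hPx j
  simp only [hpP, prod_mul_distrib, prod_const, card_univ, Fintype.card_fin, inv_pow]
  field_simp
  ring

theorem hankel_det_eq_resultant (n m N : ℕ) (hN : N = m + n + 1)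
    (p q : Polynomial ℂ) (hpdeg : p.natDegree = n) (hqdeg : q.natDegree = m)
    (hp0 : p.leadingCoeff ≠ 0) (hq0 : q.leadingCoeff ≠ 0)
    (x : Fin N → ℂ) (hx : Function.Injective x)
    (hpx : ∀ j, p.eval (x j) ≠ 0) (hqx : ∀ j, q.eval (x j) ≠ 0)
    (t : ℕ → ℂ)
    (ht : ∀ k, t k = ∑ j, (q.eval (x j) / p.eval (x j)) * x j ^ k / Wd x j) :
    Hdet t n =
      (-1 : ℂ) ^ (m * n + n * (n + 1) / 2) * p.leadingCoeff /
          (∏ j, p.eval (x j)) * Res p q :=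
  hankel_det_eq_resultant_general n m N hN p q hpdeg hqdeg hp0 x hx hpx t ht
end
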